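/- The fixed point of the ODE dQ/dt = 2η(βR* − ΔQ) + η²(Δ + Δ²Q − 2ΔβR*) with R* = β/Δ and β = √(2Δ/π) is Q* = (ηΔ + 2β²/Δ·(1 − ηΔ))/(2Δ − ηΔ²), valid for 0 < η < 2/Δ, and substituting into ε = 1 − 2βR* + ΔQ* yields ε_∞ = (1 − 2/π)/(1 − ηΔ/2). -/

import Mathlib

/-! Writing `m = βR*` for the teacher–student overlap, the fixed-point equation is linear in `Q`:
after dividing by `η ≠ 0` it reads `Δ Q (2 − ηΔ) = ηΔ + 2m(1 − ηΔ)`, and `ηΔ < 2` lets us solve it.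
Substituting into `ε = 1 − 2m + ΔQ` collapses to `ε = (1 − m)/(1 − ηΔ/2)`.
With `R* = β/Δ` and `β² = 2Δ/π` the overlap is `m = 2/π`. -/

open Real

theorem sqrt_two_mul_div_pi_mul_div_self {Δ : ℝ} (hΔ : 0 < Δ) :
    √(2 * Δ / π) * (√(2 * Δ / π) / Δ) = 2 / π := by
  rw [← mul_div_assoc, mul_self_sqrt (by positivity)]
  field_simp

section FixedPoint

variable {Δ η m Q : ℝ}

theorem eq_of_sgd_fixedPoint (hΔ : Δ ≠ 0) (hη : η ≠ 0) (hηΔ : η * Δ ≠ 2)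
    (h : 2 * η * (m - Δ * Q) + η ^ 2 * (Δ + Δ ^ 2 * Q - 2 * Δ * m) = 0) :
    Q = (η * Δ + 2 * m * (1 - η * Δ)) / (2 * Δ - η * Δ ^ 2) := by
  have hden : 2 * Δ - η * Δ ^ 2 ≠ 0 := by
    rw [show 2 * Δ - η * Δ ^ 2 = Δ * (2 - η * Δ) by ring]
    exact mul_ne_zero hΔ (sub_ne_zero.mpr (Ne.symm hηΔ))
  have hlin : Q * (2 * Δ - η * Δ ^ 2) = η * Δ + 2 * m * (1 - η * Δ) :=
    mul_left_cancel₀ hη (by linear_combination -h)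
  exact eq_div_of_mul_eq hden hlin

theorem error_eq_of_eq_sgd_fixedPoint (hΔ : Δ ≠ 0) (hηΔ : η * Δ ≠ 2)
    (hQ : Q = (η * Δ + 2 * m * (1 - η * Δ)) / (2 * Δ - η * Δ ^ 2)) :
    1 - 2 * m + Δ * Q = (1 - m) / (1 - η * Δ / 2) := by
  have h2 : 2 - η * Δ ≠ 0 := sub_ne_zero.mpr (Ne.symm hηΔ)
  rw [hQ, show 2 * Δ - η * Δ ^ 2 = Δ * (2 - η * Δ) by ring,
    show 1 - η * Δ / 2 = (2 - η * Δ) / 2 by ring, mul_div_assoc', mul_div_mul_left _ _ hΔ,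
    div_div_eq_mul_div, eq_div_iff h2, add_mul, div_mul_cancel₀ _ h2]
  ring

end FixedPoint

/-- Fixed point of the `Q`-ODE with `R* = β/Δ`, `β = √(2Δ/π)`:
`Q* = (ηΔ + 2β²/Δ (1 − ηΔ))/(2Δ − ηΔ²)`, and the resulting error is
`(1 − 2/π)/(1 − ηΔ/2)`. -/
theorem stmt13 (Δ η Q : ℝ) (hΔ : 0 < Δ) (hη : 0 < η) (hη2 : η < 2 / Δ)
    (hQ : 2 * η * (Real.sqrt (2 * Δ / Real.pi) * (Real.sqrt (2 * Δ / Real.pi) / Δ) - Δ * Q)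
        + η ^ 2 * (Δ + Δ ^ 2 * Q
          - 2 * Δ * Real.sqrt (2 * Δ / Real.pi) * (Real.sqrt (2 * Δ / Real.pi) / Δ)) = 0) :
    Q = (η * Δ + 2 * Real.sqrt (2 * Δ / Real.pi) ^ 2 / Δ * (1 - η * Δ)) / (2 * Δ - η * Δ ^ 2) ∧
    1 - 2 * Real.sqrt (2 * Δ / Real.pi) * (Real.sqrt (2 * Δ / Real.pi) / Δ) + Δ * Q
        = (1 - 2 / Real.pi) / (1 - η * Δ / 2) := by
  set β := √(2 * Δ / π)
  have hm : β * (β / Δ) = 2 / π := sqrt_two_mul_div_pi_mul_div_self hΔ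
  have hηΔ : η * Δ ≠ 2 := ((lt_div_iff₀ hΔ).mp hη2).ne
  have hfix : Q = (η * Δ + 2 * (2 / π) * (1 - η * Δ)) / (2 * Δ - η * Δ ^ 2) :=
    eq_of_sgd_fixedPoint hΔ.ne' hη.ne' hηΔ (by rw [← hm]; linear_combination hQ)
  constructor
  · rw [hfix, ← hm]
    ring
  · rw [mul_assoc, hm]
    exact error_eq_of_eq_sgd_fixedPoint hΔ.ne' hηΔ hfix
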